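/- arXiv:0912.3206 — 2 statements merged into one kernel-verified Lean document; each statement's English description precedes it below -/
import Mathlib

section
/- For the fixed-energy sandpile on a finite connected graph G, any configuration whose total particle count is less than the number of edges of G is stabilizable. -/
variable {V : Type*} [Fintype V] [DecidableEq V]

/-- Toppling at vertex `v`: remove `deg v` particles from `v` and send one along
each incident edge. -/
def topple (G : SimpleGraph V) [DecidableRel G.Adj] (c : V → ℕ) (v : V) : V → ℕ :=
  fun w => if w = v then c v - G.degree v else c w + (if G.Adj v w then 1 else 0)

/-- Result of performing the topplings listed in `L`, in order. -/
def runTopplings (G : SimpleGraph V) [DecidableRel G.Adj] (c : V → ℕ) : List V → (V → ℕ)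
  | [] => c
  | v :: L => runTopplings G (topple G c v) L

/-- A sequence of topplings (no sinks) is legal if each toppled vertex is unstable
at the moment it topples. -/
def LegalSeq (G : SimpleGraph V) [DecidableRel G.Adj] : (V → ℕ) → List V → Prop
  | _, [] => True
  | c, v :: L => G.degree v ≤ c v ∧ LegalSeq G (topple G c v) L

/-- A configuration (no sinks) is stable if every vertex has fewer particles than
its degree. -/
def StableConf (G : SimpleGraph V) [DecidableRel G.Adj] (c : V → ℕ) : Prop :=
  ∀ v, c v < G.degree v

/-- A configuration (no sinks) is stabilizable if some finite sequence of legal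
topplings reaches a stable configuration. -/
def Stabilizable (G : SimpleGraph V) [DecidableRel G.Adj] (c : V → ℕ) : Prop :=
  ∃ L : List V, LegalSeq G c L ∧ StableConf G (runTopplings G c L)

section Aux

variable (G : SimpleGraph V) [DecidableRel G.Adj]

lemma runTopplings_append (c : V → ℕ) (A B : List V) :
    runTopplings G c (A ++ B) = runTopplings G (runTopplings G c A) B := by
  induction A generalizing c with
  | nil => rfl
  | cons v T ih => simp [runTopplings, ih]

lemma legalSeq_append {A B : List V} : ∀ {c : V → ℕ},
    LegalSeq G c (A ++ B) ↔ LegalSeq G c A ∧ LegalSeq G (runTopplings G c A) B := by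
  induction A with
  | nil => intro c; simp [LegalSeq, runTopplings]
  | cons v T ih =>
    intro c
    show (G.degree v ≤ c v ∧ LegalSeq G _ (T ++ B)) ↔ _
    rw [ih]
    simp [LegalSeq, runTopplings, and_assoc]

lemma run_count_identity (L : List V) : ∀ (c : V → ℕ), LegalSeq G c L → ∀ u,
    runTopplings G c L u + L.count u * G.degree u
      = c u + ∑ x ∈ G.neighborFinset u, L.count x := by
  induction L with
  | nil => intro c _ u; simp [runTopplings]
  | cons v T ih =>
    intro c hL u
    obtain ⟨h1, h2⟩ := hL
    have key := ih (topple G c v) h2 u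
    have hcount : ∀ x, (v :: T).count x = T.count x + if v = x then 1 else 0 := by
      intro x; simp [List.count_cons]
    have hsum : ∑ x ∈ G.neighborFinset u, (v :: T).count x
        = (∑ x ∈ G.neighborFinset u, T.count x) + if G.Adj u v then 1 else 0 := by
      simp only [hcount]
      rw [Finset.sum_add_distrib, Finset.sum_ite_eq (G.neighborFinset u) v (fun _ => 1)]
      simp [SimpleGraph.mem_neighborFinset]
    show runTopplings G (topple G c v) T u + (v :: T).count u * G.degree u = _
    rw [hsum, hcount u]
    by_cases huv : u = v
    · subst huv
      have htop : topple G c u u = c u - G.degree u := by simp [topple]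
      rw [htop] at key
      rw [if_pos rfl, if_neg (G.irrefl), Nat.add_zero, Nat.succ_mul]
      omega
    · by_cases hA : G.Adj u v
      · have hA' : G.Adj v u := hA.symm
        have htop : topple G c v u = c u + 1 := by simp [topple, huv, hA']
        rw [htop] at key
        rw [if_neg (fun h => huv h.symm), if_pos hA, Nat.add_zero]
        omega
      · have hA' : ¬ G.Adj v u := fun h => hA h.symm
        have htop : topple G c v u = c u := by simp [topple, huv, hA']
        rw [htop] at key
        rw [if_neg (fun h => huv h.symm), if_neg hA, Nat.add_zero, Nat.add_zero]
        omega

lemma sum_nbr (f : V → ℕ) :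
    ∑ u, ∑ x ∈ G.neighborFinset u, f x = ∑ x, f x * G.degree x := by
  have h1 : ∀ u, ∑ x ∈ G.neighborFinset u, f x = ∑ x, if G.Adj u x then f x else 0 := by
    intro u
    rw [SimpleGraph.neighborFinset_eq_filter, Finset.sum_filter]
  simp only [h1]
  rw [Finset.sum_comm]
  refine Finset.sum_congr rfl (fun x _ => ?_)
  have h2 : ∀ u, (if G.Adj u x then f x else 0) = if G.Adj x u then f x else 0 := by
    intro u
    by_cases hA : G.Adj u x
    · rw [if_pos hA, if_pos hA.symm]
    · rw [if_neg hA, if_neg (fun h => hA h.symm)]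
  simp only [h2]
  rw [← Finset.sum_filter, ← SimpleGraph.neighborFinset_eq_filter, Finset.sum_const,
    smul_eq_mul, SimpleGraph.degree, mul_comm]

lemma sum_run {L : List V} {c : V → ℕ} (hL : LegalSeq G c L) :
    ∑ v, runTopplings G c L v = ∑ v, c v := by
  have h1 : ∑ u, (runTopplings G c L u + L.count u * G.degree u)
      = ∑ u, (c u + ∑ x ∈ G.neighborFinset u, L.count x) :=
    Finset.sum_congr rfl (fun u _ => run_count_identity G L c hL u)
  rw [Finset.sum_add_distrib, Finset.sum_add_distrib, sum_nbr] at h1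
  exact Nat.add_right_cancel h1

lemma run_le {L : List V} {c : V → ℕ} (hL : LegalSeq G c L) (u : V) :
    runTopplings G c L u ≤ ∑ v, c v := by
  rw [← sum_run G hL]
  exact Finset.single_le_sum (fun v _ => Nat.zero_le _) (Finset.mem_univ u)

lemma exists_last_split {v : V} {L : List V} (h : v ∈ L) :
    ∃ A B : List V, L = A ++ v :: B ∧ v ∉ B := by
  induction L with
  | nil => cases h
  | cons x T ih =>
    by_cases hv : v ∈ T
    · obtain ⟨A, B, rfl, hB⟩ := ih hv
      exact ⟨x :: A, B, rfl, hB⟩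
    · have hx : v = x := by
        rcases List.mem_cons.1 h with h' | h'
        · exact h'
        · exact absurd h' hv
      exact ⟨[], T, by simp [hx], hv⟩

lemma card_le_of_all_mem {c : V → ℕ} {L : List V} (hL : LegalSeq G c L)
    (hall : ∀ v : V, v ∈ L) : G.edgeFinset.card ≤ ∑ v, c v := by
  classical
  set i : V → ℕ := fun v => L.reverse.idxOf v with hi
  have step1 : ∀ v : V, (∑ x ∈ G.neighborFinset v, if i x < i v then (1:ℕ) else 0)
      ≤ runTopplings G c L v := by
    intro v
    obtain ⟨A, B, hAB, hB⟩ := exists_last_split (hall v)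
    have hrun : runTopplings G c L = runTopplings G (topple G (runTopplings G c A) v) B := by
      rw [hAB, runTopplings_append]
      rfl
    have hlegB : LegalSeq G (topple G (runTopplings G c A) v) B := by
      have h2 := ((legalSeq_append G (A := A) (B := v :: B)).1 (hAB ▸ hL)).2
      exact h2.2
    have hid := run_count_identity G B _ hlegB v
    rw [List.count_eq_zero.2 hB, Nat.zero_mul, Nat.add_zero] at hid
    have hge : (∑ x ∈ G.neighborFinset v, B.count x) ≤ runTopplings G c L v := by
      rw [hrun, hid]
      exact Nat.le_add_left _ _
    refine le_trans (Finset.sum_le_sum (fun x hx => ?_)) hge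
    have hrev : L.reverse = B.reverse ++ v :: A.reverse := by
      rw [hAB]
      simp
    split_ifs with hlt
    · rw [Nat.one_le_iff_ne_zero, Ne, List.count_eq_zero]
      intro hxB
      have hiv : i v = B.length := by
        show List.idxOf v L.reverse = B.length
        rw [hrev, List.idxOf_append_of_notMem (by simpa using hB),
          List.idxOf_cons_self, List.length_reverse, Nat.add_zero]
      have hix : B.length ≤ i x := by
        have : i x = B.reverse.length + (v :: A.reverse).idxOf x := by
          show List.idxOf x L.reverse = _
          rw [hrev]
          exact List.idxOf_append_of_notMem (by simpa using hxB)
        rw [this, List.length_reverse]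
        exact Nat.le_add_right _ _
      omega
    · exact Nat.zero_le _
  have hinj : ∀ x y : V, i x = i y → x = y := by
    intro x y hxy
    exact (List.idxOf_inj (List.mem_reverse.2 (hall x))).1 hxy
  have hsplit : ∀ v x, x ∈ G.neighborFinset v →
      ((if i x < i v then (1:ℕ) else 0) + (if i v < i x then 1 else 0)) = 1 := by
    intro v x hx
    have hne : x ≠ v := G.ne_of_adj ((SimpleGraph.mem_neighborFinset _ _ _).1 hx).symm
    have : i x ≠ i v := fun h => hne (hinj _ _ h)
    rcases lt_trichotomy (i x) (i v) with h | h | h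
    · rw [if_pos h, if_neg (by omega)]
    · exact absurd h this
    · rw [if_neg (by omega), if_pos h]
  have hFF : (∑ v, ∑ x ∈ G.neighborFinset v, if i x < i v then (1:ℕ) else 0)
           + (∑ v, ∑ x ∈ G.neighborFinset v, if i v < i x then (1:ℕ) else 0)
           = 2 * G.edgeFinset.card := by
    rw [← SimpleGraph.sum_degrees_eq_twice_card_edges, ← Finset.sum_add_distrib]
    refine Finset.sum_congr rfl fun v _ => ?_
    rw [← Finset.sum_add_distrib,
      show G.degree v = ∑ _x ∈ G.neighborFinset v, 1 from Finset.card_eq_sum_ones _]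
    exact Finset.sum_congr rfl fun x hx => hsplit v x hx
  have hsym : (∑ v, ∑ x ∈ G.neighborFinset v, if i v < i x then (1:ℕ) else 0)
      = ∑ v, ∑ x ∈ G.neighborFinset v, if i x < i v then (1:ℕ) else 0 := by
    simp only [SimpleGraph.neighborFinset_eq_filter, Finset.sum_filter]
    rw [Finset.sum_comm]
    refine Finset.sum_congr rfl fun v _ => Finset.sum_congr rfl fun x _ => ?_
    by_cases hA : G.Adj v x
    · rw [if_pos hA.symm, if_pos hA]
    · rw [if_neg (fun h => hA h.symm), if_neg hA]
  have hF : (∑ v, ∑ x ∈ G.neighborFinset v, if i x < i v then (1:ℕ) else 0)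
      = G.edgeFinset.card := by omega
  calc G.edgeFinset.card
      = ∑ v, ∑ x ∈ G.neighborFinset v, if i x < i v then (1:ℕ) else 0 := hF.symm
    _ ≤ ∑ v, runTopplings G c L v := Finset.sum_le_sum (fun v _ => step1 v)
    _ = ∑ v, c v := sum_run G hL

lemma legal_snoc {c : V → ℕ} {L : List V} (hL : LegalSeq G c L) {v : V}
    (hv : G.degree v ≤ runTopplings G c L v) : LegalSeq G c (L ++ [v]) :=
  (legalSeq_append G).2 ⟨hL, hv, True.intro⟩

lemma length_eq_sum_count (l : List V) : l.length = ∑ v, l.count v := by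
  induction l with
  | nil => simp
  | cons x T ih =>
    have hc : ∀ v : V, (x :: T).count v = T.count v + if x = v then 1 else 0 := by
      intro v; simp [List.count_cons]
    simp only [List.length_cons, hc]
    rw [Finset.sum_add_distrib, Finset.sum_ite_eq Finset.univ x (fun _ => 1),
      if_pos (Finset.mem_univ x), ih]

end Aux

noncomputable def chain (G : SimpleGraph V) [DecidableRel G.Adj] (c : V → ℕ)
    (h : ∀ L : List V, LegalSeq G c L → ∃ v, G.degree v ≤ runTopplings G c L v) :
    ℕ → {L : List V // LegalSeq G c L}
  | 0 => ⟨[], True.intro⟩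
  | n + 1 =>
    let p := chain G c h n
    ⟨p.1 ++ [Classical.choose (h p.1 p.2)],
      legal_snoc G p.2 (Classical.choose_spec (h p.1 p.2))⟩

lemma chain_length (G : SimpleGraph V) [DecidableRel G.Adj] (c : V → ℕ)
    (h : ∀ L : List V, LegalSeq G c L → ∃ v, G.degree v ≤ runTopplings G c L v) :
    ∀ n, (chain G c h n).1.length = n
  | 0 => rfl
  | n + 1 => by
    show ((chain G c h n).1 ++ [_]).length = n + 1
    rw [List.length_append, chain_length G c h n]
    rfl

lemma chain_prefix (G : SimpleGraph V) [DecidableRel G.Adj] (c : V → ℕ)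
    (h : ∀ L : List V, LegalSeq G c L → ∃ v, G.degree v ≤ runTopplings G c L v)
    {n m : ℕ} (hnm : n ≤ m) : List.IsPrefix (chain G c h n).1 (chain G c h m).1 := by
  induction m, hnm using Nat.le_induction with
  | base => exact List.prefix_refl _
  | succ m hm ih => exact ih.trans ⟨_, rfl⟩

/-- Any configuration on a finite connected graph whose total particle count is
less than the number of edges is stabilizable. -/
theorem stabilizable_of_total_lt_edges (G : SimpleGraph V) [DecidableRel G.Adj]
    (hconn : G.Connected) (c : V → ℕ)
    (h : ∑ v, c v < G.edgeFinset.card) :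
    Stabilizable G c := by
  classical
  by_contra hns
  have hV : Nonempty V := hconn.nonempty
  have hext : ∀ L : List V, LegalSeq G c L → ∃ v, G.degree v ≤ runTopplings G c L v := by
    intro L hL
    by_contra hno
    push_neg at hno
    exact hns ⟨L, hL, hno⟩
  set S := ∑ v, c v with hS
  let Ch : ℕ → List V := fun n => (chain G c hext n).1
  have hleg : ∀ n, LegalSeq G c (Ch n) := fun n => (chain G c hext n).2
  -- pigeonhole: some vertex is toppled unboundedly often
  have hbig : ∃ v : V, ∀ N, ∃ n, N ≤ (Ch n).count v := by
    by_contra hb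
    push_neg at hb
    choose N hN using hb
    have h1 : (Ch (∑ v, N v)).length = ∑ v, (Ch (∑ v, N v)).count v :=
      length_eq_sum_count _
    have h2 : ∑ v, (Ch (∑ v, N v)).count v < ∑ v, N v :=
      Finset.sum_lt_sum_of_nonempty Finset.univ_nonempty (fun v _ => hN v _)
    have h3 : (Ch (∑ v, N v)).length = ∑ v, N v := chain_length G c hext _
    omega
  obtain ⟨v0, hv0⟩ := hbig
  -- unboundedness propagates across edges
  have hstep : ∀ u w, G.Adj u w → (∀ N, ∃ n, N ≤ (Ch n).count u) →
      (∀ N, ∃ n, N ≤ (Ch n).count w) := by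
    intro u w hA hu N
    obtain ⟨n, hn⟩ := hu (S + N * G.degree w + 1)
    refine ⟨n, ?_⟩
    have hid := run_count_identity G (Ch n) c (hleg n) w
    have hrun : runTopplings G c (Ch n) w ≤ S := run_le G (hleg n) w
    have hmem : (Ch n).count u ≤ ∑ x ∈ G.neighborFinset w, (Ch n).count x :=
      Finset.single_le_sum (f := fun x => (Ch n).count x) (fun x _ => Nat.zero_le _)
        ((SimpleGraph.mem_neighborFinset _ _ _).2 hA.symm)
    have h2 : S + N * G.degree w + 1 ≤ S + (Ch n).count w * G.degree w := by
      calc S + N * G.degree w + 1 ≤ (Ch n).count u := hn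
        _ ≤ ∑ x ∈ G.neighborFinset w, (Ch n).count x := hmem
        _ ≤ c w + ∑ x ∈ G.neighborFinset w, (Ch n).count x := Nat.le_add_left _ _
        _ = runTopplings G c (Ch n) w + (Ch n).count w * G.degree w := hid.symm
        _ ≤ S + (Ch n).count w * G.degree w := Nat.add_le_add_right hrun _
    by_contra hc
    push_neg at hc
    have h4 := Nat.mul_le_mul_right (G.degree w) (Nat.le_of_lt hc)
    omega
  -- by connectivity, every vertex is toppled unboundedly often
  have hall : ∀ w : V, ∀ N, ∃ n, N ≤ (Ch n).count w := by
    have key : ∀ (a b : V) (_ : G.Walk a b),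
        (∀ N, ∃ n, N ≤ (Ch n).count a) → (∀ N, ∃ n, N ≤ (Ch n).count b) := by
      intro a b p
      induction p with
      | nil => exact id
      | cons hadj _ ih => exact fun ha => ih (hstep _ _ hadj ha)
    intro w
    obtain ⟨p⟩ := hconn.preconnected v0 w
    exact key v0 w p hv0
  have hmemv : ∀ w : V, ∃ n, w ∈ Ch n := by
    intro w
    obtain ⟨n, hn⟩ := hall w 1
    exact ⟨n, List.count_pos_iff.1 (by omega)⟩
  choose nn hnn using hmemv
  have hNN : ∀ w : V, w ∈ Ch (Finset.univ.sup nn) := fun w =>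
    (chain_prefix G c hext (Finset.le_sup (Finset.mem_univ w))).subset (hnn w)
  exact absurd (card_le_of_all_mem G (hleg _) hNN) (Nat.not_le.2 h)
end

section
/- Any configuration on a finite connected graph G without sinks in which every vertex v has at least 2·deg(v) − 1 particles is not stabilizable; in particular, on the torus Z_n^2 any configuration with at least 7 particles on every site never stabilizes. -/
variable {V : Type*} [Fintype V] [DecidableEq V]

/-- The discrete torus Z_n × Z_n: two distinct vertices are adjacent if they differ
by one in exactly one coordinate. -/
def torus (n : ℕ) : SimpleGraph (ZMod n × ZMod n) where
  Adj v w := v ≠ w ∧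
    ((v.2 = w.2 ∧ (v.1 = w.1 + 1 ∨ w.1 = v.1 + 1)) ∨
     (v.1 = w.1 ∧ (v.2 = w.2 + 1 ∨ w.2 = v.2 + 1)))
  symm := by
    constructor
    intro v w h
    exact ⟨h.1.symm, by tauto⟩
  loopless := by
    constructor
    intro v h
    exact h.1 rfl

instance (n : ℕ) : DecidableRel (torus n).Adj := by
  intro v w
  unfold torus
  infer_instance

/-!
Let `L` be a legal toppling sequence and `v` a vertex toppling least often in `L`. Every toppling
of `v` sends out `deg v` particles, and every neighbour of `v` topples at least as often, so `v`
receives at least as many particles as it sends. Hence `v` ends with at least its initial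
`c v ≥ deg v` particles and is unstable. On the torus every vertex has degree at most 4.
-/

namespace SimpleGraph

variable (G : SimpleGraph V) [DecidableRel G.Adj]

theorem topple_add_ite_degree {c : V → ℕ} {u : V} (hu : G.degree u ≤ c u) (w : V) :
    topple G c u w + (if u = w then G.degree w else 0) = c w + if G.Adj u w then 1 else 0 := by
  unfold topple
  split_ifs with hwu hadj <;> subst_vars <;> simp_all

theorem sum_neighborFinset_count_cons (L : List V) (u v : V) :
    ∑ w ∈ G.neighborFinset v, (u :: L).count w
      = ∑ w ∈ G.neighborFinset v, L.count w + if G.Adj u v then 1 else 0 := by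
  simp [List.count_cons, Finset.sum_add_distrib, G.adj_comm]

theorem runTopplings_add_count_mul_degree {c : V → ℕ} {L : List V} (hL : LegalSeq G c L)
    (v : V) :
    runTopplings G c L v + L.count v * G.degree v
      = c v + ∑ w ∈ G.neighborFinset v, L.count w := by
  induction L generalizing c with
  | nil => simp [runTopplings]
  | cons u L ih =>
    obtain ⟨hu, hL⟩ := hL
    have hstep := topple_add_ite_degree G hu v
    have hrun := ih hL
    rw [runTopplings, sum_neighborFinset_count_cons]
    simp only [List.count_cons, beq_iff_eq, add_mul, ite_mul, one_mul, zero_mul]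
    omega

theorem count_mul_degree_le_sum_neighborFinset_count {L : List V} {v : V}
    (hv : ∀ w, L.count v ≤ L.count w) :
    L.count v * G.degree v ≤ ∑ w ∈ G.neighborFinset v, L.count w := by
  rw [← card_neighborFinset_eq_degree, mul_comm, ← smul_eq_mul]
  exact Finset.card_nsmul_le_sum _ _ _ fun w _ => hv w

theorem not_stabilizable_of_degree_le [Nonempty V] {c : V → ℕ}
    (hc : ∀ v, G.degree v ≤ c v) :
    ¬ Stabilizable G c := by
  rintro ⟨L, hL, hstable⟩
  obtain ⟨v, -, hv⟩ := Finset.exists_min_image Finset.univ L.count Finset.univ_nonempty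
  have hcons := runTopplings_add_count_mul_degree G hL v
  have hmin := count_mul_degree_le_sum_neighborFinset_count G fun w => hv w (Finset.mem_univ w)
  have := hstable v
  have := hc v
  omega

end SimpleGraph

theorem torus_degree_le_four (n : ℕ) [NeZero n] (v : ZMod n × ZMod n) :
    (torus n).degree v ≤ 4 := by
  rw [← SimpleGraph.card_neighborFinset_eq_degree]
  refine (Finset.card_le_card fun w hw => ?_).trans
    (Finset.card_le_four (a := (v.1 + 1, v.2)) (b := (v.1 - 1, v.2)) (c := (v.1, v.2 + 1))
      (d := (v.1, v.2 - 1)))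
  obtain ⟨-, ⟨h2, h1 | h1⟩ | ⟨h1, h2 | h2⟩⟩ := (SimpleGraph.mem_neighborFinset _ _ _).mp hw
  all_goals simp [Prod.ext_iff, h1, h2]

/-- Any configuration on a finite connected graph without sinks in which every vertex
`v` has at least `2·deg v − 1` particles is not stabilizable; in particular, on the
torus `Z_n²` (where every vertex has degree 4) any configuration with at least 7
particles on every site never stabilizes. -/
theorem not_stabilizable_of_large (G : SimpleGraph V) [DecidableRel G.Adj]
    (hconn : G.Connected) (c : V → ℕ) (h : ∀ v, 2 * G.degree v - 1 ≤ c v) :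
    ¬ Stabilizable G c ∧
    ∀ (n : ℕ) [NeZero n], 3 ≤ n → ∀ c' : ZMod n × ZMod n → ℕ,
      (∀ v, 7 ≤ c' v) → ¬ Stabilizable (torus n) c' := by
  have : Nonempty V := hconn.nonempty
  refine ⟨G.not_stabilizable_of_degree_le fun v => by have := h v; omega, ?_⟩
  intro n _ _ c' hc'
  exact (torus n).not_stabilizable_of_degree_le fun v => by
    have := torus_degree_le_four n v
    have := hc' v
    omega
end
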